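/- arXiv:1809.09681 — 2 statements merged into one kernel-verified Lean document; each statement's English description precedes it below -/
import Mathlib

section
/- For every nonnegative integer d, the polynomials p_d(z) = P_{d,d}(z) satisfy the differential-recurrence identity 2z(3z+1) p_d'(z) = (3dz + 4d + 2) p_d(z) - (d+1) p_{d+1}(z) as polynomials in z over the rationals. -/
open Polynomial

/-- The multinomial coefficient `(a+b+c)! / (a! b! c!)`. -/
def mult3 (a b c : ℕ) : ℕ := (a + b + c).factorial / (a.factorial * b.factorial * c.factorial)

/-- `P k n = ∑_{b=0}^{⌊n/2⌋} multinomial(k+n-b; k, b, n-2b) z^b ∈ ℚ[z]`. -/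
noncomputable def Ppoly (k n : ℕ) : Polynomial ℚ :=
  ∑ b ∈ Finset.range (n / 2 + 1), C (mult3 k b (n - 2 * b) : ℚ) * X ^ b

/-! Comparing coefficients of `z^(m+1)`, the identity says
`(d+1)·[z^(m+1)] p_{d+1} = (3d-6m)·[z^m] p_d + (4d-2m)·[z^(m+1)] p_d`.
All three coefficients are multinomials differing by one in each slot, so the ratio rule
`(c+1)·M(a,b,c+1) = (a+b+c+1)·M(a,b,c)` expresses them as rational multiples of one multinomial
and the claim becomes an identity of rational functions; when `d < 2m+2` some of the
coefficients vanish and the identity degenerates. -/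

open Nat

lemma mult3_mul_factorial (a b c : ℕ) : mult3 a b c * (a ! * b ! * c !) = (a + b + c)! := by
  refine Nat.div_mul_cancel ?_
  calc a ! * b ! * c ! = a ! * (b ! * c !) := mul_assoc ..
    _ ∣ a ! * (b + c)! := mul_dvd_mul_left _ (factorial_mul_factorial_dvd_factorial_add b c)
    _ ∣ (a + (b + c))! := factorial_mul_factorial_dvd_factorial_add a (b + c)
    _ = (a + b + c)! := by rw [add_assoc]

lemma mult3_comm_left (a b c : ℕ) : mult3 a b c = mult3 b a c := by
  simp only [mult3, add_comm a b, mul_comm a !]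

lemma mult3_comm_right (a b c : ℕ) : mult3 a b c = mult3 a c b := by
  simp only [mult3, add_assoc, add_comm b c, mul_assoc, mul_comm b !]

lemma succ_mul_mult3_succ_right (a b c : ℕ) :
    (c + 1) * mult3 a b (c + 1) = (a + b + c + 1) * mult3 a b c := by
  have hpos : 0 < a ! * b ! * c ! := by positivity
  refine Nat.eq_of_mul_eq_mul_right hpos ?_
  calc (c + 1) * mult3 a b (c + 1) * (a ! * b ! * c !)
      = mult3 a b (c + 1) * (a ! * b ! * (c + 1)!) := by rw [factorial_succ]; ring
    _ = (a + b + c + 1) * (mult3 a b c * (a ! * b ! * c !)) := by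
      rw [mult3_mul_factorial, mult3_mul_factorial, ← add_assoc, factorial_succ]
    _ = _ := by ring

lemma mult3_succ_right (a b c : ℕ) :
    (mult3 a b (c + 1) : ℚ) = (a + b + c + 1) / (c + 1) * mult3 a b c := by
  rw [div_mul_eq_mul_div, eq_div_iff (by positivity), mul_comm]
  exact_mod_cast succ_mul_mult3_succ_right a b c

lemma mult3_succ_mid (a b c : ℕ) :
    (mult3 a (b + 1) c : ℚ) = (a + b + c + 1) / (b + 1) * mult3 a b c := by
  rw [mult3_comm_right, mult3_succ_right, mult3_comm_right a b]
  ring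

lemma mult3_succ_left (a b c : ℕ) :
    (mult3 (a + 1) b c : ℚ) = (a + b + c + 1) / (a + 1) * mult3 a b c := by
  rw [mult3_comm_left, mult3_succ_mid, mult3_comm_left b]
  ring

lemma coeff_Ppoly (k n b : ℕ) :
    (Ppoly k n).coeff b = if 2 * b ≤ n then (mult3 k b (n - 2 * b) : ℚ) else 0 := by
  simp only [Ppoly, finsetSum_coeff, coeff_C_mul, coeff_X_pow, mul_ite, mul_one, mul_zero,
    Finset.sum_ite_eq, Finset.mem_range]
  congr 1
  apply propext
  omega

lemma coeff_X_mul_derivative {R : Type*} [CommSemiring R] (p : R[X]) (n : ℕ) :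
    (X * derivative p).coeff n = n * p.coeff n := by
  cases n <;> simp [coeff_derivative, mul_comm]

lemma coeff_Ppoly_succ_diag_zero (d : ℕ) :
    ((d : ℚ) + 1) * (Ppoly (d + 1) (d + 1)).coeff 0 = (4 * d + 2) * (Ppoly d d).coeff 0 := by
  simp only [coeff_Ppoly, mul_zero, zero_le, if_true, Nat.sub_zero, mult3_succ_left,
    mult3_succ_right]
  push_cast
  field_simp
  ring

lemma coeff_Ppoly_succ_diag_succ (d m : ℕ) :
    ((d : ℚ) + 1) * (Ppoly (d + 1) (d + 1)).coeff (m + 1)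
      = (3 * d - 6 * m) * (Ppoly d d).coeff m + (4 * d - 2 * m) * (Ppoly d d).coeff (m + 1) := by
  simp only [coeff_Ppoly]
  rcases lt_trichotomy d (2 * m + 1) with hd | rfl | hd
  · rcases Nat.lt_succ_iff_lt_or_eq.mp hd with hd | rfl
    · rw [if_neg (by omega), if_neg (by omega), if_neg (by omega)]
      ring
    · rw [if_pos le_rfl, if_neg (by omega), if_neg (by omega)]
      push_cast
      ring
  · rw [if_pos (by omega), if_pos (by omega), if_neg (by omega),
      show 2 * m + 1 - 2 * m = 0 + 1 by omega, show 2 * m + 1 + 1 - 2 * (m + 1) = 0 by omega,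
      mult3_succ_right, mult3_succ_left, mult3_succ_mid]
    push_cast
    field_simp
    ring
  · obtain ⟨c, rfl⟩ : ∃ c, d = 2 * m + 2 + c := ⟨d - (2 * m + 2), by omega⟩
    rw [if_pos (by omega), if_pos (by omega), if_pos (by omega),
      show 2 * m + 2 + c + 1 - 2 * (m + 1) = c + 1 by omega,
      show 2 * m + 2 + c - 2 * m = c + 1 + 1 by omega, show 2 * m + 2 + c - 2 * (m + 1) = c by omega,
      mult3_succ_left, mult3_succ_right, mult3_succ_mid, mult3_succ_right, mult3_succ_right]
    push_cast
    field_simp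
    ring

theorem stmt2 (d : ℕ) :
    C 2 * X * (C 3 * X + 1) * derivative (Ppoly d d) =
      (C (3 * (d : ℚ)) * X + C (4 * (d : ℚ) + 2)) * Ppoly d d
        - C ((d : ℚ) + 1) * Ppoly (d + 1) (d + 1) := by
  set p := Ppoly d d
  have hL : C 2 * X * (C 3 * X + 1) * derivative p
      = C 6 * (X * (X * derivative p)) + C 2 * (X * derivative p) := by
    rw [show (6 : ℚ) = 2 * 3 by norm_num, C_mul]; ring
  have hR : (C (3 * (d : ℚ)) * X + C (4 * (d : ℚ) + 2)) * p
      = C (3 * (d : ℚ)) * (X * p) + C (4 * (d : ℚ) + 2) * p := by ring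
  rw [hL, hR, eq_sub_iff_add_eq]
  ext (_ | m) <;> simp only [coeff_add, coeff_C_mul, coeff_X_mul_zero, coeff_X_mul_derivative]
  · linear_combination coeff_Ppoly_succ_diag_zero d
  · simp only [coeff_X_mul, coeff_X_mul_derivative]
    push_cast
    linear_combination coeff_Ppoly_succ_diag_succ d m
end

section
/- Let d, e \geq 1 and let u_{0,0}, \ldots, u_{0,e-1} be indeterminates. Let U_0(Y) = \sum_{j=0}^{e-1} u_{0,j} Y^{j+2} and let I_0(Y) be the compositional inverse of Y + U_0(Y) in \mathbb{Q}[u_{0,0},\ldots,u_{0,e-1}][[Y]]. Write U_0(I_0(Y)) = \sum_{j \geq 0} v_{0,j} Y^{j+2}. Then for every j \geq 0, v_{0,j} = -\frac{1}{j+2} \sum_{\mathbf{a} \cdot \mathbb{N} = j+1} (-1)^{|\mathbf{a}|} \binom{|\mathbf{a}| + j + 1}{\mathbf{a}, j+1} u_{0,0}^{a_1} \cdots u_{0,e-1}^{a_e}, where the sum runs over tuples \mathbf{a} = (a_1,\ldots,a_e) of nonnegative integers with a_1 + 2a_2 + \cdots + e a_e = j+1. -/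
open PowerSeries

/-- Composition `f(g(Y))` of formal power series, valid when `g` has zero constant term. -/
noncomputable def psComp {A : Type*} [CommRing A] (f g : PowerSeries A) : PowerSeries A :=
  PowerSeries.mk fun n => ∑ k ∈ Finset.range (n + 1), coeff k f * coeff n (g ^ k)

/-- The multinomial coefficient `(∑ aᵢ + s)! / (∏ aᵢ! * s!)`. -/
def multinom {m : ℕ} (a : Fin m → ℕ) (s : ℕ) : ℕ :=
  (∑ i, a i + s).factorial / ((∏ i, (a i).factorial) * s.factorial)

/-!
The constant term of `I₀` is forced to vanish by the coefficients of `Y` and `Y²` in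
`(Y + U₀)(I₀) = Y` (using that `u₀,₀` is prime), so `I₀` is the genuine compositional inverse
of `F = Y (1 + V)` with `V = ∑ u₀,ⱼ Y^{j+1}`, and `U₀(I₀) = Y - I₀`. Lagrange inversion gives
`(N + 1) [Y^{N+1}] I₀ = [Y^N] (1 + V)^{-(N+1)}`: differentiate `I₀(F) = Y` and use that
`[Y^N] F^m F' (1 + V)^{-(N+1)} = δ_{m,N}` for `m ≤ N`, the case `m < N` being the vanishing
residue of the derivative of `F^{m-N}`. Expanding `(1 + V)^{-(j+2)}` by the negative binomial
series and the multinomial theorem gives the formula.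
-/

open Finset

theorem multinom_eq_choose_mul_multinomial {m : ℕ} (a : Fin m → ℕ) (s : ℕ) :
    multinom a s = (∑ i, a i + s).choose s * Nat.multinomial univ a := by
  have hfact : (∑ i, a i + s).factorial = (∑ i, a i + s).choose s * Nat.multinomial univ a *
      ((∏ i, (a i).factorial) * s.factorial) := by
    rw [← Nat.choose_mul_factorial_mul_factorial (Nat.le_add_left s (∑ i, a i)),
      Nat.add_sub_cancel, ← Nat.multinomial_spec univ a]
    ring
  rw [multinom, hfact, Nat.mul_div_cancel _ (by positivity)]

section psComp

variable {R : Type*} [CommRing R]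

theorem PowerSeries.coeff_pow_eq_zero_of_lt {g : R⟦X⟧} (hg : constantCoeff g = 0) {n k : ℕ}
    (h : n < k) : coeff n (g ^ k) = 0 := by
  obtain ⟨g', rfl⟩ := X_dvd_iff.2 hg
  rw [mul_pow, coeff_X_pow_mul', if_neg (by omega)]

theorem coeff_psComp (f g : R⟦X⟧) (n : ℕ) :
    coeff n (psComp f g) = ∑ k ∈ range (n + 1), coeff k f * coeff n (g ^ k) :=
  coeff_mk _ _

theorem coeff_psComp_of_le {g : R⟦X⟧} (hg : constantCoeff g = 0) (f : R⟦X⟧) {m n : ℕ}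
    (h : m ≤ n) : coeff m (psComp f g) = ∑ k ∈ range (n + 1), coeff k f * coeff m (g ^ k) := by
  rw [coeff_psComp]
  refine sum_subset (range_subset_range.2 (by omega)) fun k _ hk => ?_
  rw [coeff_pow_eq_zero_of_lt hg (by simpa using hk), mul_zero]

theorem psComp_eq_subst {g : R⟦X⟧} (hg : constantCoeff g = 0) (f : R⟦X⟧) :
    psComp f g = f.subst g := by
  ext n
  rw [coeff_psComp, coeff_subst' (HasSubst.of_constantCoeff_zero' hg),
    finsum_eq_sum_of_support_subset _ (s := range (n + 1))]
  · simp only [smul_eq_mul]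
  · intro k hk
    by_contra hkn
    exact hk (by simp only [coeff_pow_eq_zero_of_lt hg (by simpa using hkn), smul_zero])

theorem coeff_psComp_mul {g : R⟦X⟧} (hg : constantCoeff g = 0) (f M : R⟦X⟧) (n : ℕ) :
    coeff n (psComp f g * M) = ∑ k ∈ range (n + 1), coeff k f * coeff n (g ^ k * M) := by
  simp_rw [coeff_mul, mul_sum]
  rw [sum_comm]
  refine sum_congr rfl fun p hp => ?_
  rw [coeff_psComp_of_le hg f (n := n) (by have := mem_antidiagonal.1 hp; omega), sum_mul]
  simp only [mul_assoc]

end psComp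

namespace PowerSeries

variable {R : Type*} [CommRing R]

theorem subst_eq_X_of_subst_eq_X {F G : R⟦X⟧} (hF0 : constantCoeff F = 0)
    (hF1 : IsUnit (coeff 1 F)) (hG0 : constantCoeff G = 0) (hFG : F.subst G = X) :
    G.subst F = X := by
  have hF := HasSubst.of_constantCoeff_zero' hF0
  have hG := HasSubst.of_constantCoeff_zero' hG0
  obtain ⟨Q, hQ⟩ : ∃ Q : R⟦X⟧, Q.subst F = X := ⟨_, subst_substInvOfIsUnit_left F hF0 hF1⟩
  have hGQ : G = Q := by
    have h := subst_comp_subst_apply hF hG Q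
    rwa [hQ, hFG, X_subst, subst_X hG] at h
  rw [hGQ, hQ]

section Lagrange

variable {P W : R⟦X⟧}

/-- Divided by `X ^ (t + 1)`, this is the Laurent-series identity `t F' F⁻⁽ᵗ⁺¹⁾ = -(F⁻ᵗ)'` for
`F = X P`. -/
theorem natCast_mul_derivative_X_mul_mul_pow (hPW : P * W = 1) (t : ℕ) :
    (t : R⟦X⟧) * (d⁄dX R (X * P) * W ^ (t + 1)) = (t : R⟦X⟧) * W ^ t - X * d⁄dX R (W ^ t) := by
  have hW : d⁄dX R W = -(W ^ 2 * d⁄dX R P) := by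
    have h := congrArg (d⁄dX R) hPW
    rw [Derivation.leibniz, Derivation.map_one_eq_zero, smul_eq_mul, smul_eq_mul] at h
    linear_combination W * h - d⁄dX R W * hPW
  rw [Derivation.leibniz_pow, hW, Derivation.leibniz, derivative_X, smul_eq_mul, smul_eq_mul,
    nsmul_eq_mul]
  cases t with
  | zero => simp
  | succ t =>
    simp only [Nat.add_sub_cancel]
    push_cast
    linear_combination ((t : R⟦X⟧) + 1) * W ^ (t + 1) * hPW

theorem coeff_derivative_X_mul_mul_pow_eq_zero [IsAddTorsionFree R] (hPW : P * W = 1) {t : ℕ}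
    (ht : t ≠ 0) : coeff t (d⁄dX R (X * P) * W ^ (t + 1)) = 0 := by
  obtain ⟨s, rfl⟩ : ∃ s, t = s + 1 := ⟨t - 1, by omega⟩
  have h := congrArg (coeff (s + 1)) (natCast_mul_derivative_X_mul_mul_pow hPW (s + 1))
  rw [← map_natCast C, map_sub, coeff_C_mul, coeff_C_mul, coeff_succ_X_mul,
    coeff_derivative, Nat.cast_succ, mul_comm (coeff (s + 1) _), sub_self, ← Nat.cast_succ,
    ← nsmul_eq_mul] at h
  exact (nsmul_eq_zero_iff_right ht).1 h

theorem coeff_X_mul_pow_mul_derivative_mul_pow [IsAddTorsionFree R] (hPW : P * W = 1)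
    {m N : ℕ} (hm : m ≤ N) :
    coeff N ((X * P) ^ m * (d⁄dX R (X * P) * W ^ (N + 1))) = if m = N then 1 else 0 := by
  have hPWm : P ^ m * W ^ m = 1 := by rw [← mul_pow, hPW, one_pow]
  have hsplit : (X * P) ^ m * (d⁄dX R (X * P) * W ^ (N + 1))
      = X ^ m * (d⁄dX R (X * P) * W ^ (N - m + 1)) := by
    calc (X * P) ^ m * (d⁄dX R (X * P) * W ^ (N + 1))
        = (P ^ m * W ^ m) * (X ^ m * (d⁄dX R (X * P) * W ^ (N - m + 1))) := by
          rw [show N + 1 = m + (N - m + 1) by omega, pow_add]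
          ring
      _ = _ := by rw [hPWm, one_mul]
  rw [hsplit, coeff_X_pow_mul', if_pos hm]
  split_ifs with hmN
  · subst hmN
    have h0 := congrArg constantCoeff hPW
    rw [map_mul, map_one] at h0
    rw [Nat.sub_self, zero_add, pow_one, coeff_zero_eq_constantCoeff_apply, map_mul,
      ← coeff_zero_eq_constantCoeff_apply, coeff_derivative, coeff_succ_X_mul]
    simpa using h0
  · exact coeff_derivative_X_mul_mul_pow_eq_zero hPW (by omega)


theorem coeff_derivative_eq_coeff_pow_of_subst_eq_X [IsAddTorsionFree R] {G : R⟦X⟧}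
    (hPW : P * W = 1) (hG0 : constantCoeff G = 0) (hG : (X * P).subst G = X) (N : ℕ) :
    coeff N (d⁄dX R G) = coeff N (W ^ (N + 1)) := by
  have hF0 : constantCoeff (X * P) = 0 := by simp
  have hP0 : IsUnit (coeff 1 (X * P)) := by
    rw [coeff_succ_X_mul, coeff_zero_eq_constantCoeff_apply]
    exact IsUnit.of_mul_eq_one (constantCoeff W) (by rw [← map_mul, hPW, map_one])
  have hchain : (d⁄dX R G).subst (X * P) * d⁄dX R (X * P) = 1 := by
    rw [← derivative_subst (HasSubst.of_constantCoeff_zero' hF0),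
      subst_eq_X_of_subst_eq_X hF0 hP0 hG0 hG, derivative_X]
  calc coeff N (d⁄dX R G)
      = ∑ k ∈ range (N + 1), coeff k (d⁄dX R G) * if k = N then 1 else 0 := by simp
    _ = coeff N (psComp (d⁄dX R G) (X * P) * (d⁄dX R (X * P) * W ^ (N + 1))) := by
      rw [coeff_psComp_mul hF0]
      refine sum_congr rfl fun k hk => ?_
      rw [coeff_X_mul_pow_mul_derivative_mul_pow hPW (by simpa [Nat.lt_succ_iff] using hk)]
    _ = coeff N (W ^ (N + 1)) := by rw [psComp_eq_subst hF0, ← mul_assoc, hchain, one_mul]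

end Lagrange

theorem pow_succ_eq_subst_invOneSubPow {V W : R⟦X⟧} (hV : constantCoeff V = 0)
    (hVW : (1 + V) * W = 1) (m : ℕ) :
    W ^ (m + 1) = (invOneSubPow R (m + 1)).val.subst (-V) := by
  have hnegV : HasSubst (-V) := HasSubst.of_constantCoeff_zero' (by simpa using hV)
  have hinv : (1 + V) ^ (m + 1) * (invOneSubPow R (m + 1)).val.subst (-V) = 1 := by
    have h := congrArg (substAlgHom (R := R) hnegV) (invOneSubPow R (m + 1)).inv_val
    rwa [invOneSubPow_inv_eq_one_sub_pow, map_mul, map_pow, map_sub, map_one, coe_substAlgHom,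
      subst_X hnegV, sub_neg_eq_add] at h
  calc W ^ (m + 1) = ((1 + V) * W) ^ (m + 1) * (invOneSubPow R (m + 1)).val.subst (-V) := by
        rw [mul_pow, mul_comm ((1 + V) ^ (m + 1)), mul_assoc, hinv, mul_one]
    _ = _ := by rw [hVW, one_pow, one_mul]

theorem coeff_sum_monomial_pow {ι : Type*} [Fintype ι] [DecidableEq ι] (w : ι → ℕ) (x : ι → R)
    (k n : ℕ) :
    coeff n ((∑ i, monomial (w i) (x i)) ^ k) =
      ∑ a ∈ (piAntidiag univ k).filter (fun a => ∑ i, w i * a i = n),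
        (Nat.multinomial univ a : R) * ∏ i, x i ^ a i := by
  rw [sum_pow_eq_sum_piAntidiag, map_sum, sum_filter]
  refine sum_congr rfl fun a _ => ?_
  simp_rw [monomial_pow, prod_monomial, ← map_natCast (C (R := R)), coeff_C_mul, coeff_monomial]
  simp only [mul_comm (a _), mul_ite, mul_zero, eq_comm]

theorem coeff_pow_succ_of_one_add_sum_monomial_mul_eq_one {r : ℕ} (w : Fin r → ℕ)
    (hw : ∀ i, 0 < w i) (x : Fin r → R) {W : R⟦X⟧}
    (hW : (1 + ∑ i, monomial (w i) (x i)) * W = 1) (m n : ℕ) :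
    coeff n (W ^ (m + 1)) =
      ∑ a ∈ (Fintype.piFinset fun _ => range (n + 1)).filter (fun a => ∑ i, w i * a i = n),
        (-1 : R) ^ (∑ i, a i) * (multinom a m : R) * ∏ i, x i ^ a i := by
  set V := ∑ i, monomial (w i) (x i)
  set S := (Fintype.piFinset fun _ => range (n + 1)).filter
    (fun a : Fin r → ℕ => ∑ i, w i * a i = n)
  have hV0 : constantCoeff V = 0 := by
    simp [V, ← coeff_zero_eq_constantCoeff_apply, coeff_monomial, (hw _).ne]
  have hle : ∀ a : Fin r → ℕ, ∀ i, a i ≤ w i * a i := fun a i => Nat.le_mul_of_pos_left _ (hw i)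
  have hmaps : ∀ a ∈ S, ∑ i, a i ∈ range (n + 1) := by
    intro a ha
    have hwa := (mem_filter.1 ha).2
    have := sum_le_sum fun i (_ : i ∈ univ) => hle a i
    rw [mem_range]
    omega
  have hfiber : ∀ k, (piAntidiag univ k).filter (fun a => ∑ i, w i * a i = n)
      = S.filter (fun a => ∑ i, a i = k) := by
    intro k
    ext a
    simp only [S, mem_filter, mem_piAntidiag, Fintype.mem_piFinset, mem_range]
    constructor
    · rintro ⟨⟨hk, -⟩, hwa⟩
      refine ⟨⟨fun i => ?_, hwa⟩, hk⟩
      have := single_le_sum (fun j _ => Nat.zero_le (w j * a j)) (mem_univ i)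
      linarith [hle a i]
    · rintro ⟨⟨-, hwa⟩, hk⟩
      exact ⟨⟨hk, fun i _ => mem_univ i⟩, hwa⟩
  rw [pow_succ_eq_subst_invOneSubPow hV0 hW, ← psComp_eq_subst (by simpa using hV0), coeff_psComp,
    ← sum_fiberwise_of_maps_to hmaps]
  refine sum_congr rfl fun k _ => ?_
  rw [invOneSubPow_val_succ_eq_mk_add_choose, coeff_mk, neg_pow, ← map_one (C (R := R)),
    ← map_neg, ← map_pow, coeff_C_mul, coeff_sum_monomial_pow, hfiber, mul_sum, mul_sum]
  refine sum_congr rfl fun a ha => ?_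
  rw [← (mem_filter.1 ha).2, multinom_eq_choose_mul_multinomial, add_comm m]
  push_cast
  ring

end PowerSeries

theorem coeff_psComp_eq_neg_of_psComp_X_add_eq_X {R : Type*} [CommRing R] {U G : R⟦X⟧}
    (hG0 : constantCoeff G = 0) (h : psComp (X + U) G = X) {n : ℕ} (hn : n ≠ 1) :
    coeff n (psComp U G) = -coeff n G := by
  have hG := HasSubst.of_constantCoeff_zero' hG0
  rw [psComp_eq_subst hG0, subst_add hG, subst_X hG, ← psComp_eq_subst hG0] at h
  rw [eq_neg_iff_add_eq_zero, ← map_add, add_comm, h, coeff_X, if_neg hn]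

theorem MvPolynomial.eq_zero_of_mul_one_add_X_mul_eq_X {σ R : Type*} [CommRing R] [IsDomain R]
    {i : σ} {a c : MvPolynomial σ R} (h : a * (1 + X i * c) = X i) : c = 0 := by
  have hX : Prime (X i : MvPolynomial σ R) := X_prime
  have hndvd : ¬ X i ∣ 1 + X i * c := fun hd =>
    hX.not_isUnit (isUnit_of_dvd_one ((dvd_add_left (dvd_mul_right _ _)).1 hd))
  obtain ⟨b, rfl⟩ := (hX.dvd_or_dvd (a := a) (by rw [h])).resolve_right hndvd
  have hunit : IsUnit (1 + X i * c) := by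
    refine IsUnit.of_mul_eq_one b (mul_left_cancel₀ hX.ne_zero ?_)
    linear_combination h
  obtain ⟨r, -, hr⟩ := isUnit_iff_eq_C_of_isReduced.1 hunit
  have hr1 : r = 1 := by simpa using (congrArg constantCoeff hr).symm
  rw [hr1, map_one, add_eq_left] at hr
  exact (mul_eq_zero.1 hr).resolve_left (X_ne_zero i)

theorem constantCoeff_eq_zero_of_psComp_eq_X {σ R : Type*} [CommRing R] [IsDomain R] [CharZero R]
    {U G : (MvPolynomial σ R)⟦X⟧} {i : σ} (hU0 : constantCoeff U = 0) (hU1 : coeff 1 U = 0)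
    (hU2 : coeff 2 U = MvPolynomial.X i) (h : psComp (X + U) G = X) : constantCoeff G = 0 := by
  have h1 := congrArg (coeff 1) h
  have h2 := congrArg (coeff 2) h
  simp [coeff_psComp, sum_range_succ, hU0, hU1, hU2, pow_two, coeff_mul, coeff_X,
    Nat.sum_antidiagonal_eq_sum_range_succ_mk] at h1 h2
  have h2c : 2 * constantCoeff G = 0 :=
    MvPolynomial.eq_zero_of_mul_one_add_X_mul_eq_X (a := -coeff 2 G) (i := i)
      (by linear_combination -h2 + MvPolynomial.X i * (coeff 1 G + 1) * h1)
  exact (mul_eq_zero.1 h2c).resolve_left two_ne_zero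

theorem stmt18_general (e : ℕ) (he : 1 ≤ e)
    (I₀ : PowerSeries (MvPolynomial (Fin e) ℚ))
    (hinv : psComp (PowerSeries.X + ∑ j : Fin e,
        (PowerSeries.monomial ((j : ℕ) + 2)) (MvPolynomial.X j)) I₀ = PowerSeries.X)
    (j : ℕ) :
    PowerSeries.coeff (j + 2)
        (psComp (∑ j : Fin e,
          (PowerSeries.monomial ((j : ℕ) + 2)) (MvPolynomial.X j)) I₀) =
      (-(1 / ((j : ℚ) + 2))) •
        Finset.sum
          ((Fintype.piFinset fun _ : Fin e => Finset.range (j + 2)).filter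
            (fun a : Fin e → ℕ => ∑ s : Fin e, ((s : ℕ) + 1) * a s = j + 1))
          (fun a : Fin e → ℕ =>
            (-1 : MvPolynomial (Fin e) ℚ) ^ (∑ s, a s) * (multinom a (j + 1) :
                MvPolynomial (Fin e) ℚ) *
              ∏ s : Fin e, (MvPolynomial.X s : MvPolynomial (Fin e) ℚ) ^ a s) := by
  set U := ∑ s : Fin e, (monomial ((s : ℕ) + 2)) (MvPolynomial.X s : MvPolynomial (Fin e) ℚ)
  set V := ∑ s : Fin e, (monomial ((s : ℕ) + 1)) (MvPolynomial.X s : MvPolynomial (Fin e) ℚ)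
  have hUV : U = X * V := by
    rw [mul_sum]
    refine sum_congr rfl fun s _ => ?_
    rw [monomial_eq_C_mul_X_pow, monomial_eq_C_mul_X_pow]
    ring
  have hV0 : constantCoeff V = 0 := by simp [V, ← coeff_zero_eq_constantCoeff_apply, coeff_monomial]
  have hV1 : coeff 1 V = MvPolynomial.X ⟨0, he⟩ := by
    rw [map_sum, sum_eq_single ⟨0, he⟩ (fun s _ hs => ?_) (by simp)]
    · simp
    · rw [coeff_monomial, if_neg fun h => hs (Fin.ext (by simpa using h.symm))]
  have hI₀ : constantCoeff I₀ = 0 :=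
    constantCoeff_eq_zero_of_psComp_eq_X (by simp [hUV, hV0]) (by simp [hUV, hV0])
      (by rw [hUV, coeff_succ_X_mul, hV1]) hinv
  obtain ⟨W, hW⟩ : ∃ W, (1 + V) * W = 1 :=
    (isUnit_iff_constantCoeff.2 (by simp [hV0])).exists_right_inv
  have hLag := coeff_derivative_eq_coeff_pow_of_subst_eq_X hW hI₀
    (by rw [← psComp_eq_subst hI₀, mul_one_add, ← hUV, hinv]) (j + 1)
  rw [coeff_derivative, coeff_pow_succ_of_one_add_sum_monomial_mul_eq_one
    (fun s : Fin e => (s : ℕ) + 1) (fun _ => Nat.succ_pos _) MvPolynomial.X hW] at hLag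
  rw [coeff_psComp_eq_neg_of_psComp_X_add_eq_X hI₀ hinv (by omega), ← hLag, ← Nat.cast_succ,
    mul_comm, ← nsmul_eq_mul]
  match_scalars
  field_simp
  ring

/-- With `U₀(Y) = ∑_{j=0}^{e-1} u_{0,j} Y^{j+2}` and `I₀` the compositional inverse of
`Y + U₀(Y)`, writing `U₀(I₀(Y)) = ∑_{j≥0} v_{0,j} Y^{j+2}`, we have
`v_{0,j} = -(1/(j+2)) ∑_{a·ℕ = j+1} (-1)^{|a|} (|a|+j+1 choose a, j+1) u_{0,0}^{a₁} ⋯ u_{0,e-1}^{a_e}`. -/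
theorem stmt18 (d e : ℕ) (hd : 1 ≤ d) (he : 1 ≤ e)
    (I₀ : PowerSeries (MvPolynomial (Fin e) ℚ))
    (hinv : psComp (PowerSeries.X + ∑ j : Fin e,
        (PowerSeries.monomial ((j : ℕ) + 2)) (MvPolynomial.X j)) I₀ = PowerSeries.X)
    (j : ℕ) :
    PowerSeries.coeff (j + 2)
        (psComp (∑ j : Fin e,
          (PowerSeries.monomial ((j : ℕ) + 2)) (MvPolynomial.X j)) I₀) =
      (-(1 / ((j : ℚ) + 2))) •
        Finset.sum
          ((Fintype.piFinset fun _ : Fin e => Finset.range (j + 2)).filter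
            (fun a : Fin e → ℕ => ∑ s : Fin e, ((s : ℕ) + 1) * a s = j + 1))
          (fun a : Fin e → ℕ =>
            (-1 : MvPolynomial (Fin e) ℚ) ^ (∑ s, a s) * (multinom a (j + 1) :
                MvPolynomial (Fin e) ℚ) *
              ∏ s : Fin e, (MvPolynomial.X s : MvPolynomial (Fin e) ℚ) ^ a s) :=
  stmt18_general e he I₀ hinv j
end
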